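/- Let θ_1, ..., θ_K ∈ ℝ^V be linearly independent vectors, each lying in the simplex Δ^{V-1} (entries non-negative summing to 1). Suppose real numbers ε_1, ..., ε_K and vectors δ_1, ..., δ_K ∈ ℝ^V with Σ_v δ_{jv} = 0 for every j, and positive reals p_1, ..., p_K, satisfy the tensor equation Σ_{j=1}^K ε_j θ_j ⊗ θ_j ⊗ θ_j + Σ_{j=1}^K p_j (δ_j ⊗ θ_j ⊗ θ_j + θ_j ⊗ δ_j ⊗ θ_j + θ_j ⊗ θ_j ⊗ δ_j) = 0 in ℝ^{V×V×V}. Then ε_j = 0 and δ_j = 0 for all j. -/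
import Mathlib


open Finset

/-- **Strong identifiability equation for linearly independent topics.** If
`θ₁, …, θ_K ∈ Δ^{V-1}` are linearly independent, `∑_v δ_{jv} = 0` for each `j`, the `p_j`
are positive, and
`∑_j ε_j θ_j⊗θ_j⊗θ_j + ∑_j p_j (δ_j⊗θ_j⊗θ_j + θ_j⊗δ_j⊗θ_j + θ_j⊗θ_j⊗δ_j) = 0`
in `ℝ^{V×V×V}`, then all `ε_j = 0` and `δ_j = 0`. -/
theorem third_order_identifiability {K V : ℕ} (θ : Fin K → Fin V → ℝ)
    (hind : LinearIndependent ℝ θ)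
    (hθ0 : ∀ j v, 0 ≤ θ j v) (hθ1 : ∀ j, ∑ v, θ j v = 1)
    (ε : Fin K → ℝ) (δ : Fin K → Fin V → ℝ) (hδ : ∀ j, ∑ v, δ j v = 0)
    (p : Fin K → ℝ) (hp : ∀ j, 0 < p j)
    (heq : ∀ u v w : Fin V,
      (∑ j, ε j * θ j u * θ j v * θ j w) +
        (∑ j, p j * (δ j u * θ j v * θ j w + θ j u * δ j v * θ j w +
          θ j u * θ j v * δ j w)) = 0) :
    ∀ j, ε j = 0 ∧ δ j = 0 := by
  intro i
  -- construct a dual functional φ with φ (θ j) = if i = j then 1 else 0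
  obtain ⟨φ, hφ⟩ : ∃ φ : (Fin V → ℝ) →ₗ[ℝ] ℝ, ∀ j, φ (θ j) = if i = j then 1 else 0 := by
    obtain ⟨φ, hφ⟩ := LinearMap.exists_extend
      ((Finsupp.lapply i).comp hind.repr)
    refine ⟨φ, fun j => ?_⟩
    have hmem : θ j ∈ Submodule.span ℝ (Set.range θ) := Submodule.subset_span ⟨j, rfl⟩
    have h := congrFun (congrArg DFunLike.coe hφ) ⟨θ j, hmem⟩
    simp only [LinearMap.comp_apply, Submodule.subtype_apply] at h
    rw [h]
    simp [hind.repr_eq_single j ⟨θ j, hmem⟩ rfl, Finsupp.single_apply, eq_comm]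
  -- step 1: pair the v-slot with φ
  have step1 : ∀ u w : Fin V,
      ε i * θ i u * θ i w + p i * (δ i u * θ i w) + p i * (θ i u * δ i w)
        + (∑ j, p j * θ j u * θ j w * φ (δ j)) = 0 := by
    intro u w
    have h0 : (∑ j, (ε j * θ j u * θ j w + p j * (δ j u * θ j w)
          + p j * (θ j u * δ j w)) • θ j)
        + (∑ j, (p j * θ j u * θ j w) • δ j) = (0 : Fin V → ℝ) := by
      funext v
      simp only [Pi.add_apply, Finset.sum_apply, Pi.smul_apply, smul_eq_mul, Pi.zero_apply]
      have h := heq u v w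
      rw [← Finset.sum_add_distrib] at h
      rw [← h, ← Finset.sum_add_distrib]
      exact Finset.sum_congr rfl fun j _ => by ring
    have h1 := congrArg φ h0
    simp only [map_add, map_sum, map_smul, smul_eq_mul, hφ, mul_ite, mul_one, mul_zero,
      Finset.sum_ite_eq, Finset.mem_univ, if_true, eq_self_iff_true, map_zero] at h1
    linear_combination h1
  -- step 2: pair the w-slot with φ
  have step2 : ∀ u : Fin V,
      ε i * θ i u + p i * δ i u + 2 * p i * φ (δ i) * θ i u = 0 := by
    intro u
    have h0 : (∑ j, (p j * θ j u * φ (δ j)) • θ j)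
        + ((ε i * θ i u + p i * δ i u) • θ i + (p i * θ i u) • δ i) = (0 : Fin V → ℝ) := by
      funext w
      simp only [Pi.add_apply, Finset.sum_apply, Pi.smul_apply, smul_eq_mul, Pi.zero_apply]
      have h := step1 u w
      rw [show (∑ j, p j * θ j u * θ j w * φ (δ j))
          = ∑ j, p j * θ j u * φ (δ j) * θ j w from
        Finset.sum_congr rfl fun j _ => by ring] at h
      linear_combination h
    have h1 := congrArg φ h0
    simp only [map_add, map_sum, map_smul, smul_eq_mul, hφ, mul_ite, mul_one, mul_zero,
      Finset.sum_ite_eq, Finset.mem_univ, if_true, eq_self_iff_true, map_zero] at h1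
    linear_combination h1
  -- sum step2 over u
  have hsum : ε i + 2 * p i * φ (δ i) = 0 := by
    have h := Finset.sum_congr rfl (fun u (_ : u ∈ Finset.univ) => step2 u)
    simp only [Finset.sum_add_distrib, ← Finset.mul_sum, Finset.sum_const, hθ1 i, hδ i,
      mul_one, mul_zero, Finset.sum_const_zero, smul_zero, add_zero] at h
    linarith [h]
  have hδi : δ i = 0 := by
    funext u
    have h := step2 u
    have hpd : p i * δ i u = 0 := by linear_combination h - θ i u * hsum
    have hpne := (hp i).ne'
    simpa [hpne] using hpd
  have hεi : ε i = 0 := by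
    have h0 : φ (δ i) = 0 := by rw [hδi, map_zero]
    rw [h0] at hsum
    linarith
  exact ⟨hεi, hδi⟩
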